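/- Let β ∈ (0, 1/2) and D > 0, let I : (β, 1/2) → ℝ be I(x) := x·ln(x/β) + (1−x)·ln((1−x)/(1−β)), and let x(Ĩ) := I⁻¹(e^{Ĩ}) for Ĩ < ln I(1/2). Then the function (ñ, Ĩ) ↦ ñ + ln(1 − 2·x(Ĩ)) + ln(1 − exp(−D·e^{ñ+Ĩ})) is jointly concave on ℝ × (−∞, ln I(1/2)). -/

import Mathlib

/-!
The function is `ñ + g(Ĩ) + h(ñ + Ĩ)` with `g(Ĩ) = ln(1 − 2·x(Ĩ))` and `h(t) = ln(1 − exp(−D·eᵗ))`,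
so it suffices that `g` and `h` are concave; for `h` this is a second-derivative computation.
The function `g` is the inverse of `u ↦ ln I((1 − eᵘ)/2)`, which is strictly decreasing and concave
(`ln I` is increasing and concave on `(β, 1/2]`, `u ↦ (1 − eᵘ)/2` is concave), and the inverse of
a decreasing concave function is concave. Log-concavity of `I = binaryKL β` means `I·I'' ≤ I'²`; it
follows from the tangent-line bounds at `β`, where `I` and `I' = binaryKLDeriv β` vanish:
`I(x) ≤ (x − β)·I'(x)` since `I` is convex, and `(x − β)·I''(x) ≤ I'(x)` since `I'` is concave
on `(0, 1/2]`.
-/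

open Real Set

lemma concaveOn_of_hasDerivAt2_nonpos {S : Set ℝ} (hS : Convex ℝ S) {f f' f'' : ℝ → ℝ}
    (hf : ∀ x ∈ S, HasDerivAt f (f' x) x) (hf' : ∀ x ∈ interior S, HasDerivAt f' (f'' x) x)
    (hf'' : ∀ x ∈ interior S, f'' x ≤ 0) : ConcaveOn ℝ S f :=
  concaveOn_of_hasDerivWithinAt2_nonpos hS
    (fun x hx ↦ (hf x hx).continuousAt.continuousWithinAt)
    (fun x hx ↦ (hf x (interior_subset hx)).hasDerivWithinAt)
    (fun x hx ↦ (hf' x hx).hasDerivWithinAt) hf''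

lemma convexOn_of_hasDerivAt2_nonneg {S : Set ℝ} (hS : Convex ℝ S) {f f' f'' : ℝ → ℝ}
    (hf : ∀ x ∈ S, HasDerivAt f (f' x) x) (hf' : ∀ x ∈ interior S, HasDerivAt f' (f'' x) x)
    (hf'' : ∀ x ∈ interior S, 0 ≤ f'' x) : ConvexOn ℝ S f :=
  convexOn_of_hasDerivWithinAt2_nonneg hS
    (fun x hx ↦ (hf x hx).continuousAt.continuousWithinAt)
    (fun x hx ↦ (hf x (interior_subset hx)).hasDerivWithinAt)
    (fun x hx ↦ (hf' x hx).hasDerivWithinAt) hf''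

lemma ConcaveOn.of_strictAntiOn_leftInvOn {𝕜 : Type*} [Field 𝕜] [LinearOrder 𝕜]
    [IsStrictOrderedRing 𝕜] {s t : Set 𝕜} {f g : 𝕜 → 𝕜} (hf : ConcaveOn 𝕜 s f)
    (hf' : StrictAntiOn f s) (ht : Convex 𝕜 t) (hg : MapsTo g t s) (hfg : LeftInvOn f g t) :
    ConcaveOn 𝕜 t g := by
  refine ⟨ht, fun y hy z hz a b ha hb hab ↦ ?_⟩
  have hc : a • y + b • z ∈ t := ht hy hz ha hb hab
  have hu : a • g y + b • g z ∈ s := hf.1 (hg hy) (hg hz) ha hb hab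
  refine (hf'.le_iff_ge (hg hc) hu).1 ?_
  calc f (g (a • y + b • z)) = a • f (g y) + b • f (g z) := by rw [hfg hc, hfg hy, hfg hz]
    _ ≤ f (a • g y + b • g z) := hf.2 (hg hy) (hg hz) ha hb hab

lemma concaveOn_log_one_sub_exp_neg_mul_exp {D : ℝ} (hD : 0 < D) :
    ConcaveOn ℝ univ (fun t ↦ log (1 - exp (-(D * exp t)))) := by
  have hs (t : ℝ) : HasDerivAt (fun t ↦ D * exp t) (D * exp t) t := (hasDerivAt_exp t).const_mul D
  have hq (t : ℝ) : HasDerivAt (fun t ↦ exp (-(D * exp t)))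
      (exp (-(D * exp t)) * -(D * exp t)) t := (hs t).neg.exp
  have hpos (t : ℝ) : 0 < 1 - exp (-(D * exp t)) := by
    have : exp (-(D * exp t)) < 1 := exp_lt_one_iff.2 (by have := exp_pos t; nlinarith)
    linarith
  refine concaveOn_of_hasDerivAt2_nonpos convex_univ
    (f' := fun t ↦ D * exp t * exp (-(D * exp t)) / (1 - exp (-(D * exp t))))
    (fun t _ ↦ ?_) (fun t _ ↦ ((hs t).mul (hq t)).div ((hq t).const_sub 1) (hpos t).ne') ?_
  · refine ((hq t).const_sub 1).log (hpos t).ne' |>.congr_deriv ?_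
    ring
  · intro t _
    simp only [Pi.mul_apply]
    have hst : 0 < D * exp t := by positivity
    have hqt : 0 < exp (-(D * exp t)) := exp_pos _
    have hb : -(D * exp t) + 1 ≤ exp (-(D * exp t)) := add_one_le_exp _
    generalize D * exp t = s at *
    generalize exp (-s) = q at *
    -- the numerator is `s * q * (1 - s - q)`
    apply div_nonpos_of_nonpos_of_nonneg _ (sq_nonneg _)
    nlinarith [mul_pos hst hqt]

noncomputable def binaryKL (β x : ℝ) : ℝ :=
  x * log (x / β) + (1 - x) * log ((1 - x) / (1 - β))

noncomputable def binaryKLDeriv (β x : ℝ) : ℝ :=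
  log (x / β) - log ((1 - x) / (1 - β))

section binaryKL

variable {β x : ℝ}

lemma hasDerivAt_log_div_const (hβ : β ≠ 0) (hx : x ≠ 0) :
    HasDerivAt (fun y ↦ log (y / β)) x⁻¹ x := by
  refine (((hasDerivAt_id x).div_const β).log (div_ne_zero hx hβ)).congr_deriv ?_
  simp only [id_eq]
  field_simp

lemma hasDerivAt_log_one_sub_div_const (hβ : β ≠ 1) (hx : x ≠ 1) :
    HasDerivAt (fun y ↦ log ((1 - y) / (1 - β))) (-(1 - x)⁻¹) x := by
  have h1β : 1 - β ≠ 0 := sub_ne_zero.2 hβ.symm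
  have h1x : 1 - x ≠ 0 := sub_ne_zero.2 hx.symm
  refine ((((hasDerivAt_id x).const_sub 1).div_const (1 - β)).log
    (div_ne_zero h1x h1β)).congr_deriv ?_
  simp only [id_eq]
  field_simp

lemma hasDerivAt_binaryKL (hβ0 : 0 < β) (hβ1 : β < 1) (hx0 : 0 < x) (hx1 : x < 1) :
    HasDerivAt (binaryKL β) (binaryKLDeriv β x) x := by
  have h := ((hasDerivAt_id x).mul (hasDerivAt_log_div_const hβ0.ne' hx0.ne')).add
    (((hasDerivAt_id x).const_sub 1).mul (hasDerivAt_log_one_sub_div_const hβ1.ne hx1.ne))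
  refine h.congr_deriv ?_
  simp only [id_eq, binaryKLDeriv]
  field_simp [sub_ne_zero.2 hx1.ne']
  ring

lemma hasDerivAt_binaryKLDeriv (hβ0 : 0 < β) (hβ1 : β < 1) (hx0 : 0 < x) (hx1 : x < 1) :
    HasDerivAt (binaryKLDeriv β) (x⁻¹ + (1 - x)⁻¹) x :=
  ((hasDerivAt_log_div_const hβ0.ne' hx0.ne').sub
    (hasDerivAt_log_one_sub_div_const hβ1.ne hx1.ne)).congr_deriv (sub_neg_eq_add _ _)

@[simp]
lemma binaryKL_self (β : ℝ) : binaryKL β β = 0 := by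
  simp [binaryKL]

@[simp]
lemma binaryKLDeriv_self (β : ℝ) : binaryKLDeriv β β = 0 := by
  simp [binaryKLDeriv]

lemma binaryKLDeriv_pos (hβ0 : 0 < β) (hβx : β < x) (hx1 : x < 1) : 0 < binaryKLDeriv β x := by
  have h1 : 0 < log (x / β) := log_pos ((one_lt_div hβ0).2 hβx)
  have h2 : log ((1 - x) / (1 - β)) < 0 :=
    log_neg (div_pos (by linarith) (by linarith)) ((div_lt_one (by linarith)).2 (by linarith))
  rw [binaryKLDeriv]
  linarith

lemma strictMonoOn_binaryKL (hβ0 : 0 < β) (hβ1 : β < 1) : StrictMonoOn (binaryKL β) (Ico β 1) := by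
  have hderiv : ∀ y ∈ Ico β 1, HasDerivAt (binaryKL β) (binaryKLDeriv β y) y :=
    fun y hy ↦ hasDerivAt_binaryKL hβ0 hβ1 (hβ0.trans_le hy.1) hy.2
  refine strictMonoOn_of_hasDerivWithinAt_pos (convex_Ico β 1)
    (fun y hy ↦ (hderiv y hy).continuousAt.continuousWithinAt)
    (fun y hy ↦ (hderiv y (interior_subset hy)).hasDerivWithinAt) fun y hy ↦ ?_
  rw [interior_Ico] at hy
  exact binaryKLDeriv_pos hβ0 hy.1 hy.2

lemma binaryKL_pos (hβ0 : 0 < β) (hβx : β < x) (hx1 : x < 1) : 0 < binaryKL β x := by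
  have hβ1 : β < 1 := hβx.trans hx1
  simpa using strictMonoOn_binaryKL hβ0 hβ1 (left_mem_Ico.2 hβ1) ⟨hβx.le, hx1⟩ hβx

lemma convexOn_binaryKL (hβ0 : 0 < β) (hβ1 : β < 1) : ConvexOn ℝ (Ioo 0 1) (binaryKL β) := by
  refine convexOn_of_hasDerivAt2_nonneg (convex_Ioo 0 1) (f'' := fun y ↦ y⁻¹ + (1 - y)⁻¹)
    (fun y hy ↦ hasDerivAt_binaryKL hβ0 hβ1 hy.1 hy.2) (fun y hy ↦ ?_) fun y hy ↦ ?_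
  all_goals rw [interior_Ioo] at hy
  · exact hasDerivAt_binaryKLDeriv hβ0 hβ1 hy.1 hy.2
  · have := sub_pos.2 hy.2
    have := hy.1
    positivity

lemma concaveOn_binaryKLDeriv (hβ0 : 0 < β) (hβ1 : β < 1) :
    ConcaveOn ℝ (Ioc 0 (1 / 2)) (binaryKLDeriv β) := by
  refine concaveOn_of_hasDerivAt2_nonpos (convex_Ioc 0 (1 / 2))
    (f'' := fun y ↦ ((1 - y) ^ 2)⁻¹ - (y ^ 2)⁻¹)
    (fun y hy ↦ hasDerivAt_binaryKLDeriv hβ0 hβ1 hy.1 (by linarith [hy.2])) (fun y hy ↦ ?_)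
    fun y hy ↦ ?_
  all_goals rw [interior_Ioc] at hy
  · have h1y : 1 - y ≠ 0 := by linarith [hy.2]
    refine ((hasDerivAt_inv hy.1.ne').add
      (((hasDerivAt_id y).const_sub 1).inv h1y)).congr_deriv ?_
    simp only [id_eq]
    ring
  · have : y ^ 2 ≤ (1 - y) ^ 2 := by nlinarith [hy.1, hy.2]
    have := inv_anti₀ (pow_pos hy.1 2) this
    linarith

lemma binaryKL_le_sub_mul_binaryKLDeriv (hβ0 : 0 < β) (hβx : β < x) (hx1 : x < 1) :
    binaryKL β x ≤ (x - β) * binaryKLDeriv β x := by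
  have hβ1 : β < 1 := hβx.trans hx1
  have h := (convexOn_binaryKL hβ0 hβ1).slope_le_of_hasDerivAt ⟨hβ0, hβ1⟩
    ⟨hβ0.trans hβx, hx1⟩ hβx (hasDerivAt_binaryKL hβ0 hβ1 (hβ0.trans hβx) hx1)
  rwa [slope_def_field, binaryKL_self, sub_zero, div_le_iff₀' (sub_pos.2 hβx)] at h

lemma sub_mul_le_binaryKLDeriv (hβ0 : 0 < β) (hβx : β < x) (hx : x ≤ 1 / 2) :
    (x - β) * (x⁻¹ + (1 - x)⁻¹) ≤ binaryKLDeriv β x := by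
  have hβ1 : β < 1 := by linarith
  have h := (concaveOn_binaryKLDeriv hβ0 hβ1).le_slope_of_hasDerivAt ⟨hβ0, hβx.le.trans hx⟩
    ⟨hβ0.trans hβx, hx⟩ hβx (hasDerivAt_binaryKLDeriv hβ0 hβ1 (hβ0.trans hβx) (by linarith))
  rwa [slope_def_field, binaryKLDeriv_self, sub_zero, le_div_iff₀' (sub_pos.2 hβx)] at h

lemma binaryKL_mul_le_binaryKLDeriv_sq (hβ0 : 0 < β) (hβx : β < x) (hx : x ≤ 1 / 2) :
    binaryKL β x * (x⁻¹ + (1 - x)⁻¹) ≤ binaryKLDeriv β x ^ 2 := by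
  have hx0 : 0 < x := hβ0.trans hβx
  have hD' : 0 ≤ x⁻¹ + (1 - x)⁻¹ := by
    have : 0 < 1 - x := by linarith
    positivity
  have hD : 0 ≤ binaryKLDeriv β x := (binaryKLDeriv_pos hβ0 hβx (by linarith)).le
  calc binaryKL β x * (x⁻¹ + (1 - x)⁻¹)
      ≤ (x - β) * binaryKLDeriv β x * (x⁻¹ + (1 - x)⁻¹) :=
        mul_le_mul_of_nonneg_right (binaryKL_le_sub_mul_binaryKLDeriv hβ0 hβx (by linarith)) hD'
    _ = (x - β) * (x⁻¹ + (1 - x)⁻¹) * binaryKLDeriv β x := by ring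
    _ ≤ binaryKLDeriv β x * binaryKLDeriv β x :=
        mul_le_mul_of_nonneg_right (sub_mul_le_binaryKLDeriv hβ0 hβx hx) hD
    _ = binaryKLDeriv β x ^ 2 := (sq _).symm

lemma concaveOn_log_binaryKL (hβ0 : 0 < β) :
    ConcaveOn ℝ (Ioc β (1 / 2)) (fun x ↦ log (binaryKL β x)) := by
  have hI {y : ℝ} (hy : y ∈ Ioc β (1 / 2)) : HasDerivAt (binaryKL β) (binaryKLDeriv β y) y :=
    hasDerivAt_binaryKL hβ0 (by linarith [hy.1, hy.2]) (hβ0.trans hy.1) (by linarith [hy.2])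
  have hIpos {y : ℝ} (hy : y ∈ Ioc β (1 / 2)) : 0 < binaryKL β y :=
    binaryKL_pos hβ0 hy.1 (by linarith [hy.2])
  refine concaveOn_of_hasDerivAt2_nonpos (convex_Ioc β (1 / 2))
    (f'' := fun y ↦ ((y⁻¹ + (1 - y)⁻¹) * binaryKL β y - binaryKLDeriv β y * binaryKLDeriv β y) /
      binaryKL β y ^ 2)
    (fun y hy ↦ (hI hy).log (hIpos hy).ne') (fun y hy ↦ ?_) fun y hy ↦ ?_
  all_goals have hy' := interior_subset hy
  · exact (hasDerivAt_binaryKLDeriv hβ0 (by linarith [hy'.1, hy'.2]) (hβ0.trans hy'.1)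
      (by linarith [hy'.2])).div (hI hy') (hIpos hy').ne'
  · refine div_nonpos_of_nonpos_of_nonneg ?_ (sq_nonneg _)
    have := binaryKL_mul_le_binaryKLDeriv_sq hβ0 hy'.1 hy'.2
    nlinarith

lemma strictMonoOn_log_binaryKL (hβ0 : 0 < β) :
    StrictMonoOn (fun x ↦ log (binaryKL β x)) (Ioc β (1 / 2)) := fun x hx y hy hxy ↦
  log_lt_log (binaryKL_pos hβ0 hx.1 (by linarith [hx.2])) <|
    strictMonoOn_binaryKL hβ0 (by linarith [hx.1, hx.2]) ⟨hx.1.le, by linarith [hx.2]⟩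
      ⟨hy.1.le, by linarith [hy.2]⟩ hxy

end binaryKL

lemma concaveOn_one_sub_exp_div_two : ConcaveOn ℝ univ (fun u ↦ (1 - exp u) / 2) :=
  concaveOn_of_hasDerivAt2_nonpos convex_univ (f' := fun u ↦ -exp u / 2)
    (fun u _ ↦ ((hasDerivAt_exp u).const_sub 1).div_const 2)
    (fun u _ ↦ (hasDerivAt_exp u).neg.div_const 2) fun u _ ↦ by
      have := exp_pos u
      linarith

lemma mapsTo_one_sub_exp_div_two {β : ℝ} (hβ : β < 1 / 2) :
    MapsTo (fun u ↦ (1 - exp u) / 2) (Iio (log (1 - 2 * β))) (Ioc β (1 / 2)) := fun u hu ↦ by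
  have h1 : exp u < 1 - 2 * β := (lt_log_iff_exp_lt (by linarith)).1 hu
  have h2 := exp_pos u
  constructor <;> simp only <;> linarith

lemma concaveOn_log_binaryKL_one_sub_exp {β : ℝ} (hβ0 : 0 < β) (hβ : β < 1 / 2) :
    ConcaveOn ℝ (Iio (log (1 - 2 * β))) (fun u ↦ log (binaryKL β ((1 - exp u) / 2))) := by
  have himage := (mapsTo_one_sub_exp_div_two hβ).image_subset
  have hconv : Convex ℝ ((fun u ↦ (1 - exp u) / 2) '' Iio (log (1 - 2 * β))) :=
    ((convex_Iio _).isPreconnected.image _ (by fun_prop)).convex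
  exact ((concaveOn_log_binaryKL hβ0).subset himage hconv).comp
    (concaveOn_one_sub_exp_div_two.subset (subset_univ _) (convex_Iio _))
    ((strictMonoOn_log_binaryKL hβ0).monotoneOn.mono himage)

lemma strictAntiOn_log_binaryKL_one_sub_exp {β : ℝ} (hβ0 : 0 < β) (hβ : β < 1 / 2) :
    StrictAntiOn (fun u ↦ log (binaryKL β ((1 - exp u) / 2))) (Iio (log (1 - 2 * β))) :=
  (strictMonoOn_log_binaryKL hβ0).comp_strictAntiOn
    (fun _ _ _ _ huv ↦ by have := exp_lt_exp.2 huv; linarith) (mapsTo_one_sub_exp_div_two hβ)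

lemma concaveOn_log_one_sub_two_mul {β : ℝ} (hβ0 : 0 < β) (hβ : β < 1 / 2) {x : ℝ → ℝ}
    (hx : ∀ y ∈ Iio (log (binaryKL β (1 / 2))), x y ∈ Ioo β (1 / 2) ∧ binaryKL β (x y) = exp y) :
    ConcaveOn ℝ (Iio (log (binaryKL β (1 / 2)))) (fun y ↦ log (1 - 2 * x y)) := by
  refine (concaveOn_log_binaryKL_one_sub_exp hβ0 hβ).of_strictAntiOn_leftInvOn
    (strictAntiOn_log_binaryKL_one_sub_exp hβ0 hβ) (convex_Iio _) (fun y hy ↦ ?_) fun y hy ↦ ?_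
  all_goals obtain ⟨⟨hβx, hx2⟩, hIx⟩ := hx y hy
  · exact log_lt_log (by linarith) (by linarith)
  · beta_reduce
    rw [exp_log (by linarith), sub_sub_cancel, mul_div_cancel_left₀ _ two_ne_zero, hIx, log_exp]

/-- Lemma 4 of the paper: in log-transformed coordinates `(ñ, Ĩ)`, the per-flow utility
term `ñ + ln(1 − 2·x(Ĩ)) + ln(1 − exp(−D·e^{ñ+Ĩ}))` is jointly concave on
`ℝ × (−∞, ln I(1/2))`, where `x(Ĩ) = I⁻¹(e^Ĩ)` and `I` is the Bernoulli KL divergence. -/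
theorem stmt_14 (β D : ℝ) (hβ : β ∈ Set.Ioo (0 : ℝ) (1 / 2)) (hD : 0 < D)
    (I : ℝ → ℝ)
    (hI : ∀ x, I x = x * Real.log (x / β) + (1 - x) * Real.log ((1 - x) / (1 - β)))
    (xinv : ℝ → ℝ)
    (hxinv : ∀ It ∈ Set.Iio (Real.log (I (1 / 2))),
      xinv It ∈ Set.Ioo β (1 / 2) ∧ I (xinv It) = Real.exp It) :
    ConcaveOn ℝ (Set.univ ×ˢ Set.Iio (Real.log (I (1 / 2))))
      (fun p : ℝ × ℝ =>
        p.1 + Real.log (1 - 2 * xinv p.2) +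
          Real.log (1 - Real.exp (-(D * Real.exp (p.1 + p.2))))) := by
  obtain rfl : I = binaryKL β := funext hI
  have hconv : Convex ℝ ((univ : Set ℝ) ×ˢ Iio (log (binaryKL β (1 / 2)))) :=
    convex_univ.prod (convex_Iio _)
  have hfst := (LinearMap.fst ℝ ℝ ℝ).concaveOn hconv
  have hsnd := (concaveOn_log_one_sub_two_mul hβ.1 hβ.2 hxinv).comp_linearMap
    (LinearMap.snd ℝ ℝ ℝ)
  have hsum := (concaveOn_log_one_sub_exp_neg_mul_exp hD).comp_linearMap
    (LinearMap.fst ℝ ℝ ℝ + LinearMap.snd ℝ ℝ ℝ)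
  exact (hfst.add (hsnd.subset (fun _ hp ↦ hp.2) hconv)).add (hsum.subset (subset_univ _) hconv)
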